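/- Suppose cos(θ_{N,N}) > 0, where θ_{N,N} = θ_{T_N S_N} for finite-dimensional subspaces T_N and S_N of equal dimension. Then the partial frame operator S_N g = Σ_{j=1}^N ⟨g, ψ_j⟩ ψ_j (where S_N = span{ψ_1,…,ψ_N}) restricts to a bijection from T_N onto S_N. -/

import Mathlib

/-!
The partial frame operator `F g = ∑ ⟪ψ j, g⟫ ψ j` is linear with range in `S = span ψ`, and
`⟪g, F g⟫ = ∑ |⟪ψ j, g⟫|²`, so its kernel is `Sᗮ`. A positive cosine means that no nonzero vector
of `T` is orthogonal to `S`, so `F` is injective on `T`; since `dim T = dim S`, it maps `T` onto `S`.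
-/

open InnerProductSpace
open scoped ComplexInnerProductSpace

/-- The cosine of the subspace angle between closed subspaces `A` and `B`. -/
noncomputable def cosAngle {H : Type*} [NormedAddCommGroup H] [InnerProductSpace ℂ H]
    (A B : Submodule ℂ H) [Submodule.HasOrthogonalProjection B] : ℝ :=
  ⨅ a : {x : H // x ∈ A ∧ ‖x‖ = 1}, ‖((Submodule.orthogonalProjectionOnto B (a : H)) : H)‖

open Module Submodule

theorem LinearMap.bijOn_of_disjoint_ker {K V W : Type*} [DivisionRing K] [AddCommGroup V]
    [Module K V] [AddCommGroup W] [Module K W] (f : V →ₗ[K] W) {A : Submodule K V}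
    {B : Submodule K W} [FiniteDimensional K A] [FiniteDimensional K B]
    (hmaps : Set.MapsTo f A B) (hker : Disjoint A (ker f)) (hdim : finrank K A = finrank K B) :
    Set.BijOn f A B := by
  have hinjOn : Set.InjOn f A := disjoint_ker_iff_injOn.mp hker
  set g : A →ₗ[K] B := f.restrict fun _ hx => hmaps hx
  have hg : Function.Injective g := fun x y hxy =>
    Subtype.ext (hinjOn x.2 y.2 (congrArg Subtype.val hxy))
  refine ⟨hmaps, hinjOn, fun y hy => ?_⟩
  obtain ⟨x, hx⟩ := (LinearMap.injective_iff_surjective_of_finrank_eq_finrank hdim).mp hg ⟨y, hy⟩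
  exact ⟨x, x.2, congrArg Subtype.val hx⟩

section PartialFrameOperator

variable (𝕜 : Type*) {E ι : Type*} [RCLike 𝕜] [NormedAddCommGroup E] [InnerProductSpace 𝕜 E]

local notation "⟪" x ", " y "⟫" => inner 𝕜 x y

theorem mem_orthogonal_span_range_iff {ψ : ι → E} {g : E} :
    g ∈ (span 𝕜 (Set.range ψ))ᗮ ↔ ∀ j, ⟪ψ j, g⟫ = 0 := by
  simp only [span_range_eq_iSup, ← iInf_orthogonal, mem_iInf,
    mem_orthogonal_singleton_iff_inner_right]

variable [Fintype ι]

noncomputable def partialFrameOperator (ψ : ι → E) : E →ₗ[𝕜] E where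
  toFun g := ∑ j, ⟪ψ j, g⟫ • ψ j
  map_add' g h := by simp only [inner_add_right, add_smul, Finset.sum_add_distrib]
  map_smul' c g := by simp only [inner_smul_right, mul_smul, Finset.smul_sum, RingHom.id_apply]

variable {𝕜} (ψ : ι → E)

theorem partialFrameOperator_apply (g : E) :
    partialFrameOperator 𝕜 ψ g = ∑ j, ⟪ψ j, g⟫ • ψ j := rfl

theorem partialFrameOperator_apply_mem_span (g : E) :
    partialFrameOperator 𝕜 ψ g ∈ span 𝕜 (Set.range ψ) :=
  sum_mem fun j _ => smul_mem _ _ (subset_span ⟨j, rfl⟩)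

theorem inner_partialFrameOperator_self (g : E) :
    ⟪g, partialFrameOperator 𝕜 ψ g⟫ = ∑ j, (‖⟪ψ j, g⟫‖ : 𝕜) ^ 2 := by
  rw [partialFrameOperator_apply, inner_sum]
  refine Finset.sum_congr rfl fun j _ => ?_
  rw [inner_smul_right, ← inner_conj_symm g (ψ j), RCLike.mul_conj]

theorem ker_partialFrameOperator :
    LinearMap.ker (partialFrameOperator 𝕜 ψ) = (span 𝕜 (Set.range ψ))ᗮ := by
  ext g
  rw [LinearMap.mem_ker, mem_orthogonal_span_range_iff]
  constructor
  · intro hg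
    have hsum : ∑ j, ‖⟪ψ j, g⟫‖ ^ 2 = 0 := by
      have := inner_partialFrameOperator_self (𝕜 := 𝕜) ψ g
      rw [hg, inner_zero_right] at this
      exact_mod_cast this.symm
    intro j
    simpa using (Finset.sum_eq_zero_iff_of_nonneg fun j _ => sq_nonneg ‖⟪ψ j, g⟫‖).mp hsum j
      (Finset.mem_univ j)
  · intro hg
    simp [partialFrameOperator_apply, hg]

end PartialFrameOperator

section CosAngle

variable {H : Type*} [NormedAddCommGroup H] [InnerProductSpace ℂ H] {A B : Submodule ℂ H}
  [B.HasOrthogonalProjection]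

theorem cosAngle_mul_norm_le {x : H} (hx : x ∈ A) :
    cosAngle A B * ‖x‖ ≤ ‖(B.orthogonalProjectionOnto x : H)‖ := by
  rcases eq_or_ne x 0 with rfl | hx0
  · simp
  have hnorm : ‖x‖ ≠ 0 := norm_ne_zero_iff.mpr hx0
  set u : H := (‖x‖ : ℂ)⁻¹ • x
  have hu : u ∈ A ∧ ‖u‖ = 1 := ⟨A.smul_mem _ hx, by simp [u, norm_smul, hnorm]⟩
  have hle : cosAngle A B ≤ ‖(B.orthogonalProjectionOnto u : H)‖ :=
    ciInf_le ⟨0, by rintro _ ⟨_, rfl⟩; exact norm_nonneg _⟩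
      (⟨u, hu⟩ : {x : H // x ∈ A ∧ ‖x‖ = 1})
  have hproj : ‖(B.orthogonalProjectionOnto u : H)‖ =
      ‖x‖⁻¹ * ‖(B.orthogonalProjectionOnto x : H)‖ := by
    simp [u, norm_smul]
  rw [hproj, le_inv_mul_iff₀ (norm_pos_iff.mpr hx0), mul_comm] at hle
  exact hle

theorem disjoint_orthogonal_of_cosAngle_pos (hcos : 0 < cosAngle A B) : Disjoint A Bᗮ := by
  rw [disjoint_def]
  intro x hxA hxB
  have h := cosAngle_mul_norm_le (B := B) hxA
  rw [orthogonalProjectionOnto_eq_zero_iff.mpr hxB, ZeroMemClass.coe_zero, norm_zero] at h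
  exact norm_eq_zero.mp (le_antisymm ((mul_nonpos_iff_pos_imp_nonpos.mp h).1 hcos) (norm_nonneg x))

end CosAngle

theorem partial_frame_operator_bijOn_general
    {H : Type*} [NormedAddCommGroup H] [InnerProductSpace ℂ H]
    (N : ℕ) (ψ : Fin N → H) (T : Submodule ℂ H) [FiniteDimensional ℂ T]
    [Submodule.HasOrthogonalProjection (Submodule.span ℂ (Set.range ψ))]
    (hdimT : Module.finrank ℂ T = N)
    (hdimS : Module.finrank ℂ (Submodule.span ℂ (Set.range ψ)) = N)
    (hcos : 0 < cosAngle T (Submodule.span ℂ (Set.range ψ))) :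
    Set.BijOn (fun g : H => ∑ j, ⟪ψ j, g⟫ • ψ j)
      (T : Set H) ((Submodule.span ℂ (Set.range ψ) : Submodule ℂ H) : Set H) := by
  have := FiniteDimensional.span_of_finite ℂ (Set.finite_range ψ)
  refine (partialFrameOperator ℂ ψ).bijOn_of_disjoint_ker
    (fun g _ => partialFrameOperator_apply_mem_span ψ g) ?_ (hdimT.trans hdimS.symm)
  rw [ker_partialFrameOperator]
  exact disjoint_orthogonal_of_cosAngle_pos hcos

/-- If `cos θ_{T_N S_N} > 0` and `dim T_N = dim S_N = N`, then the partial frame operator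
`g ↦ ∑_{j<N} ⟨g, ψ_j⟩ ψ_j` restricts to a bijection from `T_N` onto `S_N = span{ψ_1,…,ψ_N}`. -/
theorem partial_frame_operator_bijOn
    {H : Type*} [NormedAddCommGroup H] [InnerProductSpace ℂ H] [CompleteSpace H]
    (N : ℕ) (ψ : Fin N → H) (T : Submodule ℂ H) [FiniteDimensional ℂ T]
    [Submodule.HasOrthogonalProjection (Submodule.span ℂ (Set.range ψ))]
    (hdimT : Module.finrank ℂ T = N)
    (hdimS : Module.finrank ℂ (Submodule.span ℂ (Set.range ψ)) = N)
    (hcos : 0 < cosAngle T (Submodule.span ℂ (Set.range ψ))) :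
    Set.BijOn (fun g : H => ∑ j, ⟪ψ j, g⟫ • ψ j)
      (T : Set H) ((Submodule.span ℂ (Set.range ψ) : Submodule ℂ H) : Set H) :=
  partial_frame_operator_bijOn_general N ψ T hdimT hdimS hcos
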